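/- Let X, M̂, Y be normalized automata over A and S with converging behaviors x := ⟦X⟧, m := ⟦M̂⟧, y := ⟦Y⟧ (all proper since the automata are normalized). Then the bidiverging behavior of the conjoin X ⋆ M̂ ⋆ Y equals the conjoin of the behaviors: for every biinfinite word w, every i ∈ ℤ and every n ∈ ℕ, (X ⋆ M̂ ⋆ Y)(w,i,n) = (x*·m·y*)(w[i..i+n))·χ_ζ(w,x*·m·y*). -/

import Mathlib

open scoped Classical

/-- A weighted automaton over alphabet `A` and semiring `S`: a finite set of
states `Q`, initial distribution `I`, final distribution `F`, and a transition
matrix `M a` for each letter `a`. -/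
structure WA (A : Type) (S : Type) [Semiring S] where
  Q : Type
  [fin : Fintype Q]
  [deq : DecidableEq Q]
  I : Q → S
  F : Q → S
  M : A → Matrix Q Q S

attribute [instance] WA.fin WA.deq

variable {A S : Type} [Semiring S]

/-- The product `M(a₀)·…·M(a_{n−1})` over a finite word (identity for `[]`). -/
def Mword (𝒜 : WA A S) (w : List A) : Matrix 𝒜.Q 𝒜.Q S :=
  (w.map 𝒜.M).prod

/-- The converging behavior `⟦𝒜⟧(w) = Σ_{i,f} I(i)·M(w)_{i,f}·F(f)`. -/
def convB (𝒜 : WA A S) (w : List A) : S :=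
  ∑ i, ∑ f, 𝒜.I i * Mword 𝒜 w i f * 𝒜.F f

/-- The first `n` letters of an infinite word. -/
def wpre (w : ℕ → A) (n : ℕ) : List A := (List.range n).map w

/-- A pair of states `(i,f)` is activated by the infinite word `w` if for
every `n₀` there is `n ≥ n₀` with `M(w[0..n))_{i,f} ≠ 0`. -/
def Activated (𝒜 : WA A S) (w : ℕ → A) (i f : 𝒜.Q) : Prop :=
  ∀ n₀ : ℕ, ∃ n, n₀ ≤ n ∧ Mword 𝒜 (wpre w n) i f ≠ 0

/-- The diverging behavior `𝒜(w,n) = Σ_{(i,f) activated} I(i)·M(w[0..n))_{i,f}·F(f)`. -/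
noncomputable def divB (𝒜 : WA A S) (w : ℕ → A) (n : ℕ) : S :=
  ∑ p : 𝒜.Q × 𝒜.Q,
    if Activated 𝒜 w p.1 p.2 then
      𝒜.I p.1 * Mword 𝒜 (wpre w n) p.1 p.2 * 𝒜.F p.2
    else 0

/-- Product of converging power series: sum over all splittings of the word. -/
def cmul (x y : List A → S) : List A → S :=
  fun w => ∑ k ∈ Finset.range (w.length + 1), x (w.take k) * y (w.drop k)

/-- The multiplicative unit: 1 on the empty word, 0 elsewhere. -/
def cone : List A → S := fun w => match w with | [] => 1 | _ => 0

/-- Powers of a converging power series. -/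
def cpow (x : List A → S) : ℕ → (List A → S)
  | 0 => cone
  | n + 1 => cmul x (cpow x n)

/-- The star `x* = Σ_{k ≥ 0} x^k`; for proper `x` only the terms with
`k ≤ |w|` can contribute on the word `w`. -/
def cstar (x : List A → S) : List A → S :=
  fun w => ∑ k ∈ Finset.range (w.length + 1), cpow x k w

/-- `Rat*(S,A)`: the smallest set of converging power series containing all
finitely supported ones and closed under sum, product, and star of proper
members. -/
inductive IsRat : (List A → S) → Prop
  | finite (x : List A → S) (h : (Function.support x).Finite) : IsRat x
  | add {x y : List A → S} : IsRat x → IsRat y → IsRat (x + y)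
  | mul {x y : List A → S} : IsRat x → IsRat y → IsRat (cmul x y)
  | star {x : List A → S} : IsRat x → x [] = 0 → IsRat (cstar x)

/-- `χ(w,x) = 1` iff arbitrarily long prefixes of `w` have nonzero coefficient. -/
noncomputable def chi (w : ℕ → A) (x : List A → S) : S :=
  if ∀ n₀ : ℕ, ∃ n, n₀ ≤ n ∧ x (wpre w n) ≠ 0 then 1 else 0

/-- `s^ω(w,n) = s*(w[0..n))·χ(w,s*)`. -/
noncomputable def omegaPS (s : List A → S) : (ℕ → A) → ℕ → S :=
  fun w n => cstar s (wpre w n) * chi w (cstar s)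

/-- The conjoin `(x ⋆ y)(w,n) = (x·y*)(w[0..n))·χ(w,x·y*)`. -/
noncomputable def conjoinPS (x y : List A → S) : (ℕ → A) → ℕ → S :=
  fun w n => cmul x (cstar y) (wpre w n) * chi w (cmul x (cstar y))

/-- `Rat^ω(S,A)`: the smallest set of diverging power series closed under
finite sums and left/right scalar multiplication containing all `x ⋆ y` and
`z^ω` for proper rational `x`, `y`, `z`. -/
inductive IsRatOmega : ((ℕ → A) → ℕ → S) → Prop
  | zero : IsRatOmega (fun _ _ => 0)
  | add {p q : (ℕ → A) → ℕ → S} :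
      IsRatOmega p → IsRatOmega q → IsRatOmega (fun w n => p w n + q w n)
  | smul_left (s : S) {p : (ℕ → A) → ℕ → S} :
      IsRatOmega p → IsRatOmega (fun w n => s * p w n)
  | smul_right (s : S) {p : (ℕ → A) → ℕ → S} :
      IsRatOmega p → IsRatOmega (fun w n => p w n * s)
  | conjoin {x y : List A → S} :
      IsRat x → x [] = 0 → IsRat y → y [] = 0 → IsRatOmega (conjoinPS x y)
  | omega {z : List A → S} : IsRat z → z [] = 0 → IsRatOmega (omegaPS z)

/-- Scalar multiples `l·𝒜·r` of an automaton. -/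
def smulWA (l : S) (𝒜 : WA A S) (r : S) : WA A S where
  Q := 𝒜.Q
  I := fun i => l * 𝒜.I i
  F := fun f => 𝒜.F f * r
  M := 𝒜.M

/-- The disjoint-union (sum) automaton. -/
def addWA (𝒜 ℬ : WA A S) : WA A S where
  Q := 𝒜.Q ⊕ ℬ.Q
  I := Sum.elim 𝒜.I ℬ.I
  F := Sum.elim 𝒜.F ℬ.F
  M := fun a => Matrix.fromBlocks (𝒜.M a) 0 0 (ℬ.M a)

/-- `𝒜` is normalized with initial state `qI` and final state `qF`. -/
def IsNormalizedAt (𝒜 : WA A S) (qI qF : 𝒜.Q) : Prop :=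
  qI ≠ qF ∧ (∀ i, 𝒜.I i = if i = qI then 1 else 0) ∧
    (∀ f, 𝒜.F f = if f = qF then 1 else 0) ∧
    (∀ (a : A) (i : 𝒜.Q), 𝒜.M a i qI = 0) ∧ (∀ (a : A) (j : 𝒜.Q), 𝒜.M a qF j = 0)

/-- `𝒜` is normalized. -/
def IsNormalized (𝒜 : WA A S) : Prop := ∃ qI qF, IsNormalizedAt 𝒜 qI qF

/-- `𝒜` is a loopback automaton with loopback state `q₀`. -/
def IsLoopbackAt (𝒜 : WA A S) (q₀ : 𝒜.Q) : Prop :=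
  (∀ i, 𝒜.I i = if i = q₀ then 1 else 0) ∧ (∀ f, 𝒜.F f = if f = q₀ then 1 else 0)

/-- `𝒜` is a loopback automaton. -/
def IsLoopback (𝒜 : WA A S) : Prop := ∃ q₀, IsLoopbackAt 𝒜 q₀

/-- `𝒜` is a loopback automaton with prelude. -/
def IsLoopbackWithPrelude (𝒜 : WA A S) : Prop :=
  ∃ qI qF, qI ≠ qF ∧ (∀ i, 𝒜.I i = if i = qI then 1 else 0) ∧
    (∀ f, 𝒜.F f = if f = qF then 1 else 0) ∧
    (∀ (a : A) (i : 𝒜.Q), 𝒜.M a i qI = 0)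

/-- `𝒜` is a bridge automaton. -/
def IsBridge (𝒜 : WA A S) : Prop :=
  ∃ qI qF, qI ≠ qF ∧ (∀ i, 𝒜.I i = if i = qI then 1 else 0) ∧
    (∀ f, 𝒜.F f = if f = qF then 1 else 0)

/-- The unroll of a loopback automaton with loopback state `q₀`: adjoin a
fresh final state, redirect all edges ending at `q₀` to it. -/
def unroll (L : WA A S) (q₀ : L.Q) : WA A S where
  Q := L.Q ⊕ Unit
  I := Sum.elim (fun i => if i = q₀ then 1 else 0) (fun _ => 0)
  F := Sum.elim (fun _ => 0) (fun _ => 1)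
  M := fun a => Matrix.of fun p q =>
    match p, q with
    | Sum.inl i, Sum.inl j => if j = q₀ then 0 else L.M a i j
    | Sum.inl i, Sum.inr _ => L.M a i q₀
    | Sum.inr _, _ => 0

/-- The conjoin `X ⋆ Y` of two normalized automata (initial/final states
`xI`, `xF` and `yI`, `yF`): the disjoint sum of `X` minus its final state and
the roll of `Y`, with edges of `X` ending at `xF` redirected to the loopback
state `yI`. -/
def conjoinWA (X : WA A S) (xI xF : X.Q) (Y : WA A S) (yI yF : Y.Q) : WA A S where
  Q := {i : X.Q // i ≠ xF} ⊕ {j : Y.Q // j ≠ yF}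
  I := Sum.elim (fun i => if i.1 = xI then 1 else 0) (fun _ => 0)
  F := Sum.elim (fun _ => 0) (fun j => if j.1 = yI then 1 else 0)
  M := fun a => Matrix.of fun p q =>
    match p, q with
    | Sum.inl i, Sum.inl j => X.M a i.1 j.1
    | Sum.inl i, Sum.inr j => if j.1 = yI then X.M a i.1 xF else 0
    | Sum.inr _, Sum.inl _ => 0
    | Sum.inr i, Sum.inr j => if j.1 = yI then Y.M a i.1 yF else Y.M a i.1 j.1

/-- The finite slice `w[i..j)` of a biinfinite word. -/
def bpre (w : ℤ → A) (i j : ℤ) : List A :=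
  (List.range (j - i).toNat).map (fun k => w (i + k))

/-- A pair of states `(p,q)` is activated by the biinfinite word `w` if for
all `i₀ ≤ j₀` there are `i ≤ i₀` and `j ≥ j₀` with `M(w[i..j))_{p,q} ≠ 0`. -/
def BActivated (𝒜 : WA A S) (w : ℤ → A) (p q : 𝒜.Q) : Prop :=
  ∀ i₀ j₀ : ℤ, i₀ ≤ j₀ → ∃ i ≤ i₀, ∃ j, j₀ ≤ j ∧ Mword 𝒜 (bpre w i j) p q ≠ 0

/-- The bidiverging behavior
`𝒜(w,i,n) = Σ_{(p,q) activated} I(p)·M(w[i..i+n))_{p,q}·F(q)`. -/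
noncomputable def bdivB (𝒜 : WA A S) (w : ℤ → A) (i : ℤ) (n : ℕ) : S :=
  ∑ p : 𝒜.Q × 𝒜.Q,
    if BActivated 𝒜 w p.1 p.2 then
      𝒜.I p.1 * Mword 𝒜 (bpre w i (i + n)) p.1 p.2 * 𝒜.F p.2
    else 0

/-- `χ_ζ(w,x) = 1` iff arbitrarily long slices of `w` have nonzero coefficient. -/
noncomputable def chiZ (w : ℤ → A) (x : List A → S) : S :=
  if ∀ i₀ j₀ : ℤ, i₀ ≤ j₀ → ∃ i ≤ i₀, ∃ j, j₀ ≤ j ∧ x (bpre w i j) ≠ 0 then 1 else 0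

/-- `s^ζ(w,i,n) = s*(w[i..i+n))·χ_ζ(w,s*)`. -/
noncomputable def zetaPS (s : List A → S) : (ℤ → A) → ℤ → ℕ → S :=
  fun w i n => cstar s (bpre w i (i + n)) * chiZ w (cstar s)

/-- The conjoin `(x ⋆ m ⋆ y)(w,i,n) = (x*·m·y*)(w[i..i+n))·χ_ζ(w,x*·m·y*)`. -/
noncomputable def conjoin3PS (x m y : List A → S) : (ℤ → A) → ℤ → ℕ → S :=
  fun w i n =>
    cmul (cstar x) (cmul m (cstar y)) (bpre w i (i + n)) *
      chiZ w (cmul (cstar x) (cmul m (cstar y)))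

/-- `Rat^ζ(S,A)`: the smallest set of bidiverging power series closed under
finite sums and left/right scalar multiplication containing all `x ⋆ m ⋆ y`
and `z^ζ` for proper rational `x`, `m`, `y`, `z`. -/
inductive IsRatZeta : ((ℤ → A) → ℤ → ℕ → S) → Prop
  | zero : IsRatZeta (fun _ _ _ => 0)
  | add {p q : (ℤ → A) → ℤ → ℕ → S} :
      IsRatZeta p → IsRatZeta q → IsRatZeta (fun w i n => p w i n + q w i n)
  | smul_left (s : S) {p : (ℤ → A) → ℤ → ℕ → S} :
      IsRatZeta p → IsRatZeta (fun w i n => s * p w i n)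
  | smul_right (s : S) {p : (ℤ → A) → ℤ → ℕ → S} :
      IsRatZeta p → IsRatZeta (fun w i n => p w i n * s)
  | conjoin {x m y : List A → S} :
      IsRat x → x [] = 0 → IsRat m → m [] = 0 → IsRat y → y [] = 0 →
      IsRatZeta (conjoin3PS x m y)
  | zeta {z : List A → S} : IsRat z → z [] = 0 → IsRatZeta (zetaPS z)

/-- The conjoin `X ⋆ M̂ ⋆ Y` of three normalized automata: the roll of `X`
(loopback `xI`), the middle of `M̂`, and the roll of `Y` (loopback `yI`), with
the edges of `M̂` leaving `mI` re-sourced at `xI`, the edges of `M̂` entering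
`mF` re-targeted at `yI`, and direct `mI → mF` edges becoming `xI → yI`. -/
def conjoin3WA (X : WA A S) (xI xF : X.Q) (Mh : WA A S) (mI mF : Mh.Q)
    (Y : WA A S) (yI yF : Y.Q) : WA A S where
  Q := {i : X.Q // i ≠ xF} ⊕ ({k : Mh.Q // k ≠ mI ∧ k ≠ mF} ⊕ {j : Y.Q // j ≠ yF})
  I := Sum.elim (fun i => if i.1 = xI then 1 else 0) (fun _ => 0)
  F := Sum.elim (fun _ => 0) (Sum.elim (fun _ => 0) (fun j => if j.1 = yI then 1 else 0))
  M := fun a => Matrix.of fun p q =>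
    match p, q with
    | Sum.inl i, Sum.inl j => if j.1 = xI then X.M a i.1 xF else X.M a i.1 j.1
    | Sum.inl i, Sum.inr (Sum.inl k) => if i.1 = xI then Mh.M a mI k.1 else 0
    | Sum.inl i, Sum.inr (Sum.inr j) =>
        if i.1 = xI ∧ j.1 = yI then Mh.M a mI mF else 0
    | Sum.inr (Sum.inl _), Sum.inl _ => 0
    | Sum.inr (Sum.inl k), Sum.inr (Sum.inl l) => Mh.M a k.1 l.1
    | Sum.inr (Sum.inl k), Sum.inr (Sum.inr j) => if j.1 = yI then Mh.M a k.1 mF else 0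
    | Sum.inr (Sum.inr _), Sum.inl _ => 0
    | Sum.inr (Sum.inr _), Sum.inr (Sum.inl _) => 0
    | Sum.inr (Sum.inr i), Sum.inr (Sum.inr j) =>
        if j.1 = yI then Y.M a i.1 yF else Y.M a i.1 j.1

/-! The entry `(1, 4)` of the transition matrices of `X ⋆ M̂ ⋆ Y` is computed by guessing, for
every state `p`, the series `T p` of labels of paths from `p` to `4`, and checking the recursion
`T p [] = δ p 4`, `T p (a :: w) = ∑ q, M(a)_{p,q} · T q w` that characterises these columns.
Writing `z = x*·m·y*`, a state `i` of the roll of `X` gets `x_{i,q_F}·z`, and the loopback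
state `1` gets `z = m·y* + x·z`; a middle state `k` gets `m_{k,q_F}·y*`; the roll of `Y` is
treated like that of `X`, with `y* = 1 + y·y*`. As the initial and final distributions of the
conjoin are the indicators of `1` and `4`, its bidiverging behavior is `z(w[i..i+n))` times the
indicator that `(1, 4)` is activated, which is `χ_ζ(w, z)`. -/

open Finset

section PowerSeries

lemma cmul_nil (f g : List A → S) : cmul f g [] = f [] * g [] := by
  simp [cmul]

lemma add_cmul (f₁ f₂ g : List A → S) : cmul (f₁ + f₂) g = cmul f₁ g + cmul f₂ g := by
  funext w
  simp [cmul, add_mul, sum_add_distrib]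

lemma cone_cmul (g : List A → S) : cmul cone g = g := by
  funext w
  cases w with
  | nil => simp [cmul, cone]
  | cons a w => simp [cmul, sum_range_succ', cone]

lemma cmul_assoc (f g h : List A → S) : cmul (cmul f g) h = cmul f (cmul g h) := by
  funext w
  -- both sides sum over the pairs of cut points `k ≤ l` of `w`
  simp only [cmul, sum_mul, mul_sum, mul_assoc, List.length_take, List.length_drop]
  rw [sum_comm' (t' := range (w.length + 1)) (s' := fun k => Ico k (w.length + 1))
    (t := fun l => range (min l w.length + 1))
    (f := fun l k => f (List.take k (List.take l w)) *
      (g (List.drop k (List.take l w)) * h (List.drop l w)))]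
  · refine sum_congr rfl fun k hk => ?_
    rw [mem_range] at hk
    rw [sum_Ico_eq_sum_range, show w.length + 1 - k = w.length - k + 1 by omega]
    refine sum_congr rfl fun j hj => ?_
    rw [mem_range] at hj
    rw [List.take_take, List.drop_take, List.drop_drop, min_eq_left (by omega),
      Nat.add_sub_cancel_left]
  · intro l k
    simp only [mem_range, mem_Ico]
    omega

lemma cpow_eq_zero_of_length_lt {x : List A → S} (hx : x [] = 0) :
    ∀ (k : ℕ) (w : List A), w.length < k → cpow x k w = 0
  | 0, _, hw => (Nat.not_lt_zero _ hw).elim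
  | k + 1, w, hw => by
    rw [cpow, cmul]
    refine sum_eq_zero fun j hj => ?_
    rcases j with _ | j
    · simp [hx]
    · rw [cpow_eq_zero_of_length_lt hx k _ (by simp at hj ⊢; omega), mul_zero]

lemma cstar_eq_sum_range {x : List A → S} (hx : x [] = 0) {w : List A} {N : ℕ}
    (hN : w.length < N) : cstar x w = ∑ k ∈ range N, cpow x k w :=
  sum_subset (range_subset_range.2 hN) fun k _ hk =>
    cpow_eq_zero_of_length_lt hx k w (by simpa using hk)

lemma cstar_nil (x : List A → S) : cstar x [] = 1 := by
  simp [cstar, cpow, cone]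

lemma cstar_eq_cone_add_cmul {x : List A → S} (hx : x [] = 0) :
    cstar x = cone + cmul x (cstar x) := by
  funext w
  rw [Pi.add_apply, cstar, sum_range_succ', cpow, add_comm]
  congr 1
  simp only [cpow, cmul]
  rw [sum_comm]
  refine sum_congr rfl fun j hj => ?_
  rw [← mul_sum]
  rcases j with _ | j
  · simp [hx]
  · rw [cstar_eq_sum_range hx (N := w.length) (by simp at hj ⊢; omega)]

lemma cstar_cmul_eq_add {x : List A → S} (hx : x [] = 0) (g : List A → S) :
    cmul (cstar x) g = g + cmul x (cmul (cstar x) g) := by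
  conv_lhs => rw [cstar_eq_cone_add_cmul hx]
  rw [add_cmul, cone_cmul, cmul_assoc]

end PowerSeries

section Paths

def pathSeries (𝒜 : WA A S) (p q : 𝒜.Q) : List A → S := fun w => Mword 𝒜 w p q

variable (𝒜 : WA A S)

lemma pathSeries_nil (p q : 𝒜.Q) : pathSeries 𝒜 p q [] = if p = q then 1 else 0 :=
  Matrix.one_apply

lemma pathSeries_nil_of_ne {p q : 𝒜.Q} (h : p ≠ q) : pathSeries 𝒜 p q [] = 0 := by
  rw [pathSeries_nil, if_neg h]

lemma pathSeries_cons (p q : 𝒜.Q) (a : A) (w : List A) :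
    pathSeries 𝒜 p q (a :: w) = ∑ r, 𝒜.M a p r * pathSeries 𝒜 r q w := by
  simp [pathSeries, Mword, Matrix.mul_apply]

lemma pathSeries_self_of_M_eq_zero {q : 𝒜.Q} (h : ∀ a j, 𝒜.M a q j = 0) :
    pathSeries 𝒜 q q = cone := by
  funext w
  cases w with
  | nil => simp [pathSeries_nil, cone]
  | cons a w => simp [pathSeries_cons, h, cone]

lemma cmul_pathSeries_cons {p q : 𝒜.Q} (h : p ≠ q) (g : List A → S) (a : A) (w : List A) :
    cmul (pathSeries 𝒜 p q) g (a :: w) = ∑ r, 𝒜.M a p r * cmul (pathSeries 𝒜 r q) g w := by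
  simp only [cmul, List.length_cons, sum_range_succ' _ (w.length + 1), List.take_zero,
    List.drop_zero, pathSeries_nil_of_ne 𝒜 h, zero_mul, add_zero, List.take_succ_cons,
    List.drop_succ_cons, pathSeries_cons, sum_mul, mul_sum, mul_assoc]
  exact sum_comm

lemma pathSeries_eq_of_recursion (r : 𝒜.Q) (T : 𝒜.Q → List A → S)
    (hnil : ∀ p, T p [] = if p = r then 1 else 0)
    (hcons : ∀ p a w, T p (a :: w) = ∑ q, 𝒜.M a p q * T q w) (p : 𝒜.Q) :
    pathSeries 𝒜 p r = T p := by
  funext w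
  induction w generalizing p with
  | nil => rw [pathSeries_nil, hnil]
  | cons a w ih => simp only [pathSeries_cons, hcons, ih]

variable {𝒜}

lemma convB_eq_pathSeries {qI qF : 𝒜.Q} (hI : ∀ i, 𝒜.I i = if i = qI then 1 else 0)
    (hF : ∀ f, 𝒜.F f = if f = qF then 1 else 0) : convB 𝒜 = pathSeries 𝒜 qI qF := by
  funext w
  simp [convB, pathSeries, hI, hF]

lemma bdivB_eq_pathSeries_mul_chiZ {qI qF : 𝒜.Q} (hI : ∀ i, 𝒜.I i = if i = qI then 1 else 0)
    (hF : ∀ f, 𝒜.F f = if f = qF then 1 else 0) (w : ℤ → A) (i : ℤ) (n : ℕ) :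
    bdivB 𝒜 w i n = pathSeries 𝒜 qI qF (bpre w i (i + n)) * chiZ w (pathSeries 𝒜 qI qF) := by
  have hchi : chiZ w (pathSeries 𝒜 qI qF) = if BActivated 𝒜 w qI qF then 1 else 0 := rfl
  rw [bdivB, sum_eq_single (qI, qF), hchi]
  · by_cases h : BActivated 𝒜 w qI qF <;> simp [h, hI, hF, pathSeries]
  · rintro ⟨p, q⟩ _ hpq
    by_cases hp : p = qI
    · simp [hF, hp, show q ≠ qF by rintro rfl; exact hpq (by rw [hp])]
    · simp [hI, hp]
  · simp

end Paths

section Sums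

variable {α M : Type} [Fintype α] [DecidableEq α] [AddCommMonoid M]

lemma sum_subtype_ne_ite_eq (f : α → M) {a b : α} (ha : f a = 0) :
    ∑ x : {x // x ≠ b}, (if x.1 = a then f b else f x.1) = ∑ x, f x := by
  rw [← Equiv.sum_comp (Equiv.swap a b) f, Fintype.sum_eq_add_sum_subtype_ne _ b,
    Equiv.swap_apply_right, ha, zero_add]
  refine sum_congr rfl fun x _ => ?_
  split_ifs with h
  · rw [h, Equiv.swap_apply_left]
  · rw [Equiv.swap_apply_of_ne_of_ne h x.2]

lemma sum_subtype_ne_and_ne_add (f : α → M) {a b : α} (hab : a ≠ b) (ha : f a = 0) :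
    ∑ x : {x // x ≠ a ∧ x ≠ b}, f x.1 + f b = ∑ x, f x := by
  rw [← sum_filter_add_sum_filter_not univ (fun x => x ≠ a ∧ x ≠ b),
    sum_subtype (p := fun x => x ≠ a ∧ x ≠ b) _ (by simp)]
  congr 1
  rw [show univ.filter (fun x => ¬(x ≠ a ∧ x ≠ b)) = {a, b} by ext; simp; tauto,
    sum_pair hab, ha, zero_add]

lemma sum_subtype_ite_mul {a b : α} (hab : a ≠ b) (c : S) (T : {x // x ≠ b} → S) :
    ∑ x : {x // x ≠ b}, (if x.1 = a then c else 0) * T x = c * T ⟨a, hab⟩ := by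
  refine (sum_eq_single ⟨a, hab⟩ (fun x _ hx => ?_) (by simp)).trans (by rw [if_pos rfl])
  rw [if_neg (fun h => hx (Subtype.ext h)), zero_mul]

end Sums

section Roll

variable (N : WA A S) (qI qF : N.Q)

/-- In the roll of `N` the loopback state `qI` takes over the part of `qF`: a path that reaches
it may stop there, continuing with `g`. -/
def rollSeries (g : List A → S) (p : N.Q) : List A → S :=
  if p = qI then g else cmul (pathSeries N p qF) g

variable {N qI qF}

lemma rollSeries_self (g : List A → S) : rollSeries N qI qF g qI = g :=
  if_pos rfl

lemma rollSeries_cons {g h : List A → S} (hg : g = h + cmul (pathSeries N qI qF) g) (p : N.Q)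
    (a : A) (w : List A) :
    rollSeries N qI qF g p (a :: w) =
      cmul (pathSeries N p qF) g (a :: w) + if p = qI then h (a :: w) else 0 := by
  unfold rollSeries
  split_ifs with hp
  · rw [hp, add_comm]
    exact congrFun hg _
  · rw [add_zero]

lemma sum_roll_row (hin : ∀ a i, N.M a i qI = 0) (hout : ∀ a j, N.M a qF j = 0)
    (g : List A → S) {p : N.Q} (hp : p ≠ qF) (a : A) (w : List A) :
    ∑ j : {j // j ≠ qF}, (if j.1 = qI then N.M a p qF else N.M a p j.1) *
        rollSeries N qI qF g j.1 w
      = cmul (pathSeries N p qF) g (a :: w) := by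
  rw [cmul_pathSeries_cons N hp,
    ← sum_subtype_ne_ite_eq (fun r => N.M a p r * cmul (pathSeries N r qF) g w)
      (by rw [hin, zero_mul])]
  refine sum_congr rfl fun j _ => ?_
  unfold rollSeries
  split_ifs <;> simp [pathSeries_self_of_M_eq_zero N hout, cone_cmul]

lemma sum_middle_row (hne : qI ≠ qF) (hin : ∀ a i, N.M a i qI = 0)
    (hout : ∀ a j, N.M a qF j = 0) (g : List A → S) {p : N.Q} (hp : p ≠ qF) (a : A)
    (w : List A) :
    ∑ k : {k // k ≠ qI ∧ k ≠ qF}, N.M a p k.1 * cmul (pathSeries N k.1 qF) g w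
        + N.M a p qF * g w
      = cmul (pathSeries N p qF) g (a :: w) := by
  rw [cmul_pathSeries_cons N hp,
    ← sum_subtype_ne_and_ne_add (fun r => N.M a p r * cmul (pathSeries N r qF) g w) hne
      (by rw [hin, zero_mul]),
    pathSeries_self_of_M_eq_zero N hout, cone_cmul]

end Roll

section Conjoin

variable (X : WA A S) (xI xF : X.Q) (Mh : WA A S) (mI mF : Mh.Q) (Y : WA A S) (yI yF : Y.Q)

/-- The series of labels of paths from each state of the conjoin to `conjoin3Final`. -/
def conjoin3Series : (conjoin3WA X xI xF Mh mI mF Y yI yF).Q → List A → S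
  | .inl i => rollSeries X xI xF
      (cmul (cstar (pathSeries X xI xF))
        (cmul (pathSeries Mh mI mF) (cstar (pathSeries Y yI yF))))
      i.1
  | .inr (.inl k) => cmul (pathSeries Mh k.1 mF) (cstar (pathSeries Y yI yF))
  | .inr (.inr j) => rollSeries Y yI yF (cstar (pathSeries Y yI yF)) j.1

-- The states `1` and `4` of `X ⋆ M̂ ⋆ Y`.
def conjoin3Initial (hX : xI ≠ xF) : (conjoin3WA X xI xF Mh mI mF Y yI yF).Q :=
  Sum.inl ⟨xI, hX⟩

def conjoin3Final (hY : yI ≠ yF) : (conjoin3WA X xI xF Mh mI mF Y yI yF).Q :=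
  Sum.inr (Sum.inr ⟨yI, hY⟩)

variable {X xI xF Mh mI mF Y yI yF}

lemma sum_conjoin3WA_Q (f : (conjoin3WA X xI xF Mh mI mF Y yI yF).Q → S) :
    ∑ q, f q = ∑ i, f (.inl i) + (∑ k, f (.inr (.inl k)) + ∑ j, f (.inr (.inr j))) :=
  (Fintype.sum_sum_type f).trans (congrArg _ (Fintype.sum_sum_type _))

lemma conjoin3WA_I (hX : xI ≠ xF) (p : (conjoin3WA X xI xF Mh mI mF Y yI yF).Q) :
    (conjoin3WA X xI xF Mh mI mF Y yI yF).I p =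
      if p = conjoin3Initial X xI xF Mh mI mF Y yI yF hX then 1 else 0 := by
  rcases p with p | _ | _ <;> simp [conjoin3WA, conjoin3Initial, Subtype.ext_iff]

lemma conjoin3WA_F (hY : yI ≠ yF) (p : (conjoin3WA X xI xF Mh mI mF Y yI yF).Q) :
    (conjoin3WA X xI xF Mh mI mF Y yI yF).F p =
      if p = conjoin3Final X xI xF Mh mI mF Y yI yF hY then 1 else 0 := by
  rcases p with _ | _ | p <;> simp [conjoin3WA, conjoin3Final, Subtype.ext_iff]

lemma conjoin3Series_cons (hX : IsNormalizedAt X xI xF) (hM : IsNormalizedAt Mh mI mF)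
    (hY : IsNormalizedAt Y yI yF) (p : (conjoin3WA X xI xF Mh mI mF Y yI yF).Q) (a : A)
    (w : List A) :
    conjoin3Series X xI xF Mh mI mF Y yI yF p (a :: w) =
      ∑ q, (conjoin3WA X xI xF Mh mI mF Y yI yF).M a p q *
        conjoin3Series X xI xF Mh mI mF Y yI yF q w := by
  rw [sum_conjoin3WA_Q]
  obtain ⟨hXne, -, -, hXin, hXout⟩ := hX
  obtain ⟨hMne, -, -, hMin, hMout⟩ := hM
  obtain ⟨hYne, -, -, hYin, hYout⟩ := hY
  have hYnil : pathSeries Y yI yF [] = 0 := pathSeries_nil_of_ne Y hYne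
  rcases p with i | k | j
  all_goals simp only [conjoin3WA, Matrix.of_apply, conjoin3Series, zero_mul, sum_const_zero,
    zero_add]
  · rw [rollSeries_cons (cstar_cmul_eq_add (pathSeries_nil_of_ne X hXne) _),
      sum_roll_row hXin hXout _ i.2]
    congr 1
    split_ifs with hi
    · simp only [hi, true_and]
      rw [sum_subtype_ite_mul hYne, rollSeries_self]
      exact (sum_middle_row hMne hMin hMout _ hMne a w).symm
    · simp [hi]
  · rw [sum_subtype_ite_mul hYne, rollSeries_self]
    exact (sum_middle_row hMne hMin hMout _ k.2.2 a w).symm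
  · rw [rollSeries_cons (cstar_eq_cone_add_cmul hYnil), sum_roll_row hYin hYout _ j.2]
    simp [cone]

lemma conjoin3Series_nil (hM : mI ≠ mF) (hY : yI ≠ yF)
    (p : (conjoin3WA X xI xF Mh mI mF Y yI yF).Q) :
    conjoin3Series X xI xF Mh mI mF Y yI yF p [] =
      if p = conjoin3Final X xI xF Mh mI mF Y yI yF hY then 1 else 0 := by
  rcases p with i | k | j
  · by_cases hi : i.1 = xI <;>
      simp [conjoin3WA, conjoin3Final, conjoin3Series, rollSeries, hi, cmul_nil,
        pathSeries_nil_of_ne _ hM, pathSeries_nil_of_ne _ i.2]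
  · simp [conjoin3WA, conjoin3Final, conjoin3Series, cmul_nil, pathSeries_nil_of_ne _ k.2.2]
  · by_cases hj : j.1 = yI <;>
      simp [conjoin3WA, conjoin3Series, rollSeries, hj, cmul_nil, cstar_nil,
        pathSeries_nil_of_ne _ j.2, conjoin3Final, Subtype.ext_iff]

lemma pathSeries_conjoin3WA (hX : IsNormalizedAt X xI xF) (hM : IsNormalizedAt Mh mI mF)
    (hY : IsNormalizedAt Y yI yF) :
    pathSeries (conjoin3WA X xI xF Mh mI mF Y yI yF)
        (conjoin3Initial X xI xF Mh mI mF Y yI yF hX.1)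
        (conjoin3Final X xI xF Mh mI mF Y yI yF hY.1) =
      cmul (cstar (pathSeries X xI xF)) (cmul (pathSeries Mh mI mF) (cstar (pathSeries Y yI yF))) :=
  (pathSeries_eq_of_recursion _ _ _ (conjoin3Series_nil hM.1 hY.1)
    (conjoin3Series_cons hX hM hY) _).trans (rollSeries_self _)

end Conjoin

/-- the bidiverging behavior of the conjoin of three normalized
automata is the conjoin of their converging behaviors. -/
theorem bdivB_conjoin3WA (A S : Type) [Semiring S]
    (X : WA A S) (xI xF : X.Q) (hX : IsNormalizedAt X xI xF)
    (Mh : WA A S) (mI mF : Mh.Q) (hM : IsNormalizedAt Mh mI mF)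
    (Y : WA A S) (yI yF : Y.Q) (hY : IsNormalizedAt Y yI yF) :
    ∀ (w : ℤ → A) (i : ℤ) (n : ℕ),
      bdivB (conjoin3WA X xI xF Mh mI mF Y yI yF) w i n
        = cmul (cstar (convB X)) (cmul (convB Mh) (cstar (convB Y)))
            (bpre w i (i + n)) *
          chiZ w (cmul (cstar (convB X)) (cmul (convB Mh) (cstar (convB Y)))) := by
  intro w i n
  rw [convB_eq_pathSeries hX.2.1 hX.2.2.1, convB_eq_pathSeries hM.2.1 hM.2.2.1,
    convB_eq_pathSeries hY.2.1 hY.2.2.1, ← pathSeries_conjoin3WA hX hM hY]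
  exact bdivB_eq_pathSeries_mul_chiZ (conjoin3WA_I hX.1) (conjoin3WA_F hY.1) w i n
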